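/- arXiv:2506.23947 — 10 statements merged into one kernel-verified Lean document; each statement's English description precedes it below -/
import Mathlib

section
/- Let α₂, σ > 0 and r, ρ > 1 be real numbers, and set f(x) = -α₂ x^r, g(x) = σ x^ρ for x > 0 (real powers). Assume either (a) r + 1 > 2ρ, or (b) r + 1 = 2ρ and α₂/σ² > (1/8)(r + 2 + 1/r). Then there exist constants q > 2 and L > 0 such that for all x > 0, f'(x) + ((q-1)/2)·|g'(x)|² ≤ L, i.e., -α₂ r x^{r-1} + ((q-1)/2)·σ² ρ² x^{2ρ-2} ≤ L. -/
/-- **Lemma 2.4 (monotonicity condition).**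
Let `α₂, σ > 0`, `r, ρ > 1`, with `f x = -α₂ x^r` and `g x = σ x^ρ` (real powers, `x > 0`).
If either (a) `r + 1 > 2ρ`, or (b) `r + 1 = 2ρ` and `α₂/σ² > (1/8)(r + 2 + 1/r)`, then there
exist `q > 2` and `L > 0` such that for all `x > 0`,
`f'(x) + ((q-1)/2)|g'(x)|² = -α₂ r x^(r-1) + ((q-1)/2) σ² ρ² x^(2ρ-2) ≤ L`. -/
theorem stmt_0 (α₂ σ r ρ : ℝ)
    (hα₂ : 0 < α₂) (hσ : 0 < σ) (hr : 1 < r) (hρ : 1 < ρ)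
    (hcase : r + 1 > 2 * ρ ∨ (r + 1 = 2 * ρ ∧ α₂ / σ ^ 2 > (1 / 8) * (r + 2 + 1 / r))) :
    ∃ q : ℝ, 2 < q ∧ ∃ L : ℝ, 0 < L ∧ ∀ x : ℝ, 0 < x →
      -α₂ * r * x ^ (r - 1) + ((q - 1) / 2) * σ ^ 2 * ρ ^ 2 * x ^ (2 * ρ - 2) ≤ L := by
  have hr0 : (0:ℝ) < r := by linarith
  have hαr : 0 < α₂ * r := by positivity
  rcases hcase with ha | ⟨hb, hK⟩
  · -- case (a): r + 1 > 2ρ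
    refine ⟨3, by norm_num, ?_⟩
    have hcpos : 0 < σ ^ 2 * ρ ^ 2 := by positivity
    have he : 0 < r + 1 - 2 * ρ := by linarith
    set X : ℝ := max 1 ((σ ^ 2 * ρ ^ 2 / (α₂ * r)) ^ ((r + 1 - 2 * ρ)⁻¹)) with hXdef
    have hX1 : (1:ℝ) ≤ X := le_max_left _ _
    have hXpos : (0:ℝ) < X := lt_of_lt_of_le one_pos hX1
    refine ⟨σ ^ 2 * ρ ^ 2 * X ^ (2 * ρ - 2), by positivity, ?_⟩
    intro x hx
    have h2ρ : 0 < 2 * ρ - 2 := by linarith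
    have hxp : (0:ℝ) < x ^ (2 * ρ - 2) := Real.rpow_pos_of_pos hx _
    have hxr : (0:ℝ) < x ^ (r - 1) := Real.rpow_pos_of_pos hx _
    rcases le_total x X with hxX | hXx
    · have h2 : x ^ (2 * ρ - 2) ≤ X ^ (2 * ρ - 2) :=
        Real.rpow_le_rpow hx.le hxX h2ρ.le
      nlinarith
    · -- x ≥ X : the whole expression is ≤ 0
      have h0 : (0:ℝ) ≤ σ ^ 2 * ρ ^ 2 / (α₂ * r) := by positivity
      have hxe : σ ^ 2 * ρ ^ 2 / (α₂ * r) ≤ x ^ (r + 1 - 2 * ρ) := by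
        have hle : (σ ^ 2 * ρ ^ 2 / (α₂ * r)) ^ ((r + 1 - 2 * ρ)⁻¹) ≤ x :=
          le_trans (le_max_right _ _) hXx
        have := Real.rpow_le_rpow (Real.rpow_nonneg h0 _) hle he.le
        rwa [← Real.rpow_mul h0, inv_mul_cancel₀ (ne_of_gt he), Real.rpow_one] at this
      have h1 : σ ^ 2 * ρ ^ 2 ≤ α₂ * r * x ^ (r + 1 - 2 * ρ) := by
        rw [div_le_iff₀ hαr] at hxe
        nlinarith [hxe]
      have hfac : x ^ (r - 1) = x ^ (2 * ρ - 2) * x ^ (r + 1 - 2 * ρ) := by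
        rw [← Real.rpow_add hx]; ring_nf
      have key : σ ^ 2 * ρ ^ 2 * x ^ (2 * ρ - 2) ≤ α₂ * r * x ^ (r - 1) := by
        calc σ ^ 2 * ρ ^ 2 * x ^ (2 * ρ - 2)
            ≤ (α₂ * r * x ^ (r + 1 - 2 * ρ)) * x ^ (2 * ρ - 2) := by nlinarith
          _ = α₂ * r * x ^ (r - 1) := by rw [hfac]; ring
      have hL : (0:ℝ) < σ ^ 2 * ρ ^ 2 * X ^ (2 * ρ - 2) := by positivity
      nlinarith
  · -- case (b): r + 1 = 2ρ
    have hσ2 : (0:ℝ) < σ ^ 2 := by positivity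
    have hρ0 : (0:ℝ) < ρ := by linarith
    have h1 : (1/8) * (r + 2 + 1/r) * σ ^ 2 < α₂ := by
      rw [gt_iff_lt, lt_div_iff₀ hσ2] at hK; exact hK
    have h2 : σ ^ 2 * ρ ^ 2 / 2 < α₂ * r := by
      have hρ2 : ρ = (r + 1) / 2 := by linarith
      have hrr2 : (1/8) * (r + 2 + 1/r) * σ ^ 2 * r = σ ^ 2 * (r + 1)^2 / 8 := by
        field_simp; ring
      have h3 : σ ^ 2 * (r + 1)^2 / 8 < α₂ * r := by
        have := mul_lt_mul_of_pos_right h1 hr0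
        linarith
      have h4 : σ ^ 2 * ρ ^ 2 / 2 = σ ^ 2 * (r + 1)^2 / 8 := by
        rw [hρ2]; ring
      linarith
    refine ⟨1 + 2 * (α₂ * r) / (σ ^ 2 * ρ ^ 2), ?_, 1, one_pos, ?_⟩
    · have : (1:ℝ) < 2 * (α₂ * r) / (σ ^ 2 * ρ ^ 2) := by
        rw [lt_div_iff₀ (by positivity)]
        nlinarith
      linarith
    · intro x hx
      have hexp : 2 * ρ - 2 = r - 1 := by linarith
      rw [hexp]
      have hcoef : ((1 + 2 * (α₂ * r) / (σ ^ 2 * ρ ^ 2) - 1) / 2) * σ ^ 2 * ρ ^ 2 = α₂ * r := by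
        field_simp
        ring
      have h0 : ((1 + 2 * (α₂ * r) / (σ ^ 2 * ρ ^ 2) - 1) / 2) * σ ^ 2 * ρ ^ 2 * x ^ (r - 1)
          = α₂ * r * x ^ (r - 1) := by rw [hcoef]
      linarith
end

section
/- Let α₂ > 0 and r > 1 be real numbers and h > 0 a step size; define f_h(x) = -α₂ x^r/(1 + h^{1/2} x^r) for x > 0. Then for all x, y > 0, |f_h(x) - f_h(y)| ≤ α₂ r (1 + h^{-1/2}) |x - y|. -/
/-- For `α₂ > 0`, `r > 1`, step size `h > 0`, the tamed drift
`f_h x = -α₂ x^r/(1 + h^(1/2) x^r)` (real powers, `x > 0`) satisfies the Lipschitz bound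
`|f_h x - f_h y| ≤ α₂ r (1 + h^(-1/2)) |x - y|` for all `x, y > 0`. -/
theorem stmt_4 (α₂ r h : ℝ) (hα₂ : 0 < α₂) (hr : 1 < r) (hh : 0 < h) :
    ∀ x : ℝ, 0 < x → ∀ y : ℝ, 0 < y →
      |(-α₂ * x ^ r / (1 + h ^ ((1 : ℝ) / 2) * x ^ r))
          - (-α₂ * y ^ r / (1 + h ^ ((1 : ℝ) / 2) * y ^ r))|
        ≤ α₂ * r * (1 + h ^ (-(1 : ℝ) / 2)) * |x - y| := by
  intro x hx y hy
  set s : ℝ := h ^ ((1 : ℝ) / 2) with hs_def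
  have hs : 0 < s := Real.rpow_pos_of_pos hh _
  have hinv : h ^ (-(1 : ℝ) / 2) = s⁻¹ := by
    rw [hs_def, ← Real.rpow_neg hh.le]
    norm_num
  have key := Convex.norm_image_sub_le_of_norm_hasDerivWithin_le
    (f := fun z : ℝ => -α₂ * z ^ r / (1 + s * z ^ r))
    (f' := fun z : ℝ => -α₂ * (r * z ^ (r - 1)) / (1 + s * z ^ r) ^ 2)
    (C := α₂ * r * (1 + s⁻¹)) (s := Set.Ioi (0 : ℝ)) (x := y) (y := x)
    ?_ ?_ (convex_Ioi 0) hy hx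
  · simpa [Real.norm_eq_abs, hinv] using key
  · intro z hz
    have hz0 : (0 : ℝ) < z := hz
    have hden : 0 < 1 + s * z ^ r := by positivity
    have hu : HasDerivAt (fun x : ℝ => x ^ r) (r * z ^ (r - 1)) z :=
      Real.hasDerivAt_rpow_const (Or.inl hz0.ne')
    have hnum : HasDerivAt (fun x : ℝ => -α₂ * x ^ r) (-α₂ * (r * z ^ (r - 1))) z :=
      hu.const_mul (-α₂)
    have hden' : HasDerivAt (fun x : ℝ => 1 + s * x ^ r) (s * (r * z ^ (r - 1))) z :=
      (hu.const_mul s).const_add 1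
    have := hnum.div hden' hden.ne'
    have heq : (-α₂ * (r * z ^ (r - 1)) * (1 + s * z ^ r)
        - -α₂ * z ^ r * (s * (r * z ^ (r - 1)))) / (1 + s * z ^ r) ^ 2
        = -α₂ * (r * z ^ (r - 1)) / (1 + s * z ^ r) ^ 2 := by
      congr 1
      have hzr : z ^ r = z ^ (r - 1) * z := by
        nth_rewrite 1 [show r = (r - 1) + 1 by ring]
        rw [Real.rpow_add_one hz0.ne']
      rw [hzr]; ring
    exact (heq ▸ this).hasDerivWithinAt
  · intro z hz
    have hz0 : (0 : ℝ) < z := hz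
    have hden : 0 < 1 + s * z ^ r := by positivity
    have hzr : 0 < z ^ r := Real.rpow_pos_of_pos hz0 _
    have hzr1 : 0 < z ^ (r - 1) := Real.rpow_pos_of_pos hz0 _
    rw [Real.norm_eq_abs, abs_div, abs_of_pos (pow_pos hden 2)]
    have habs : |(-α₂) * (r * z ^ (r - 1))| = α₂ * (r * z ^ (r - 1)) := by
      rw [abs_mul, abs_neg, abs_of_pos hα₂, abs_of_pos (by positivity)]
    rw [habs, div_le_iff₀ (pow_pos hden 2)]
    -- key: z^(r-1) ≤ (1 + 1/s) * (1 + s z^r)^2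
    have hkey : z ^ (r - 1) ≤ (1 + s⁻¹) * (1 + s * z ^ r) ^ 2 := by
      rcases le_or_gt z 1 with hz1 | hz1
      · have h1 : z ^ (r - 1) ≤ 1 := Real.rpow_le_one hz0.le hz1 (by linarith)
        nlinarith [inv_pos.mpr hs, sq_nonneg (s * z ^ r), mul_pos hs hzr]
      · have h1 : z ^ (r - 1) ≤ z ^ r :=
          Real.rpow_le_rpow_of_exponent_le hz1.le (by linarith)
        have h2 : s * z ^ r ≤ (1 + s * z ^ r) ^ 2 := by nlinarith [mul_pos hs hzr]
        have h3 : z ^ r ≤ s⁻¹ * (1 + s * z ^ r) ^ 2 := by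
          calc z ^ r = s * z ^ r / s := by field_simp
            _ ≤ (1 + s * z ^ r) ^ 2 / s := by
                gcongr
            _ = s⁻¹ * (1 + s * z ^ r) ^ 2 := by field_simp
        have h4 : (0:ℝ) ≤ (1 + s * z ^ r) ^ 2 := by positivity
        nlinarith
    have hr0 : 0 < r := by linarith
    calc α₂ * (r * z ^ (r - 1)) ≤ α₂ * (r * ((1 + s⁻¹) * (1 + s * z ^ r) ^ 2)) := by
          apply mul_le_mul_of_nonneg_left _ hα₂.le
          exact mul_le_mul_of_nonneg_left hkey hr0.le
      _ = α₂ * r * (1 + s⁻¹) * (1 + s * z ^ r) ^ 2 := by ring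
end

section
/- Let α₂, σ > 0 and r, ρ > 1 be real numbers with r + 1 > 2ρ, and let v > 2. Then there exists a constant L₃ ≥ 0 such that for all h > 0 and all x > 0, (-α₂ r x^{r-1})/(1 + h^{1/2} x^r)² + ((v-1)/2)·((σ ρ x^{ρ-1} - σ (r - ρ) h^{1/2} x^{r+ρ-1})/(1 + h^{1/2} x^r)²)² ≤ L₃. -/
open Real

/-- **Non-critical case `r + 1 > 2ρ`.**
For `α₂, σ > 0`, `r, ρ > 1` with `r + 1 > 2ρ` and any `v > 2`, there is `L₃ ≥ 0` such that
for all step sizes `h > 0` and all `x > 0`,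
`f_h'(x) + ((v-1)/2)|g_h'(x)|² ≤ L₃`, where `f_h'(x) = -α₂ r x^(r-1)/(1 + h^(1/2) x^r)²`
and `g_h'(x) = (σ ρ x^(ρ-1) - σ (r-ρ) h^(1/2) x^(r+ρ-1))/(1 + h^(1/2) x^r)²`. -/
theorem stmt_5 (α₂ σ r ρ v : ℝ) (hα₂ : 0 < α₂) (hσ : 0 < σ) (hr : 1 < r) (hρ : 1 < ρ)
    (hrel : r + 1 > 2 * ρ) (hv : 2 < v) :
    ∃ L₃ : ℝ, 0 ≤ L₃ ∧ ∀ h : ℝ, 0 < h → ∀ x : ℝ, 0 < x →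
      (-α₂ * r * x ^ (r - 1)) / (1 + h ^ ((1 : ℝ) / 2) * x ^ r) ^ 2
        + ((v - 1) / 2) *
          ((σ * ρ * x ^ (ρ - 1) - σ * (r - ρ) * h ^ ((1 : ℝ) / 2) * x ^ (r + ρ - 1))
              / (1 + h ^ ((1 : ℝ) / 2) * x ^ r) ^ 2) ^ 2
        ≤ L₃ := by
  have hrpos : (0:ℝ) < r := by linarith
  have hρ0 : (0:ℝ) < ρ := by linarith
  set e : ℝ := r + 1 - 2 * ρ with he_def
  have he : 0 < e := by simp only [he_def]; linarith
  set C : ℝ := σ * ρ + σ * |r - ρ| with hC_def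
  have hC : 0 < C := by
    rw [hC_def]
    have h1 : 0 ≤ σ * |r - ρ| := by positivity
    nlinarith [mul_pos hσ hρ0]
  have hv2 : (0:ℝ) < (v - 1) / 2 := by linarith
  set K : ℝ := ((v - 1) / 2) * C ^ 2 with hK_def
  have hK : 0 < K := by positivity
  have hKα : (0:ℝ) < K / (α₂ * r) := by positivity
  set A : ℝ := (K / (α₂ * r)) ^ (1 / e) with hA_def
  have hA : 0 < A := rpow_pos_of_pos hKα _
  set X : ℝ := max 1 A with hX_def
  have hX1 : (1:ℝ) ≤ X := le_max_left _ _
  have hX0 : (0:ℝ) < X := lt_of_lt_of_le one_pos hX1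
  have hL3 : (0:ℝ) ≤ K * X ^ (2 * ρ - 2) := by positivity
  refine ⟨K * X ^ (2 * ρ - 2), hL3, ?_⟩
  intro h hh x hx
  set s : ℝ := h ^ ((1:ℝ)/2) with hs_def
  have hs : 0 < s := rpow_pos_of_pos hh _
  have hxr : 0 < x ^ r := rpow_pos_of_pos hx r
  set D : ℝ := 1 + s * x ^ r with hD_def
  have hD1 : 1 ≤ D := by
    rw [hD_def]
    nlinarith [mul_pos hs hxr]
  have hD0 : 0 < D := lt_of_lt_of_le one_pos hD1
  have hD2 : (0:ℝ) < D ^ 2 := by positivity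
  have hxρ : 0 < x ^ (ρ - 1) := rpow_pos_of_pos hx _
  have hxr1 : 0 < x ^ (r - 1) := rpow_pos_of_pos hx _
  have hx2ρ : 0 < x ^ (2 * ρ - 2) := rpow_pos_of_pos hx _
  have hsplit : x ^ (r + ρ - 1) = x ^ r * x ^ (ρ - 1) := by
    rw [← Real.rpow_add hx]; ring_nf
  set N : ℝ := σ * ρ * x ^ (ρ - 1) - σ * (r - ρ) * s * x ^ (r + ρ - 1) with hN_def
  -- bound |N|
  have habs2 : |σ * (r - ρ) * s * x ^ (r + ρ - 1)|
      = σ * |r - ρ| * (s * x ^ r) * x ^ (ρ - 1) := by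
    rw [abs_mul, abs_mul, abs_mul, abs_of_pos hσ, abs_of_pos hs,
      abs_of_pos (rpow_pos_of_pos hx _), hsplit]
    ring
  have hNabs : |N| ≤ C * x ^ (ρ - 1) * D := by
    have h1 : |N| ≤ |σ * ρ * x ^ (ρ - 1)| + |σ * (r - ρ) * s * x ^ (r + ρ - 1)| :=
      abs_sub _ _
    rw [habs2, abs_of_pos (by positivity : (0:ℝ) < σ * ρ * x ^ (ρ - 1))] at h1
    have hsx : s * x ^ r ≤ D := by rw [hD_def]; linarith
    have habsnn : (0:ℝ) ≤ |r - ρ| := abs_nonneg _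
    rw [hC_def]
    have t1 : σ * ρ * x ^ (ρ - 1) ≤ σ * ρ * x ^ (ρ - 1) * D :=
      le_mul_of_one_le_right (by positivity) hD1
    have t2 : σ * |r - ρ| * (s * x ^ r) * x ^ (ρ - 1)
        ≤ σ * |r - ρ| * D * x ^ (ρ - 1) :=
      mul_le_mul_of_nonneg_right
        (mul_le_mul_of_nonneg_left hsx (by positivity)) hxρ.le
    calc |N| ≤ σ * ρ * x ^ (ρ - 1) + σ * |r - ρ| * (s * x ^ r) * x ^ (ρ - 1) := h1
      _ ≤ σ * ρ * x ^ (ρ - 1) * D + σ * |r - ρ| * D * x ^ (ρ - 1) := by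
          linarith only [t1, t2]
      _ = (σ * ρ + σ * |r - ρ|) * x ^ (ρ - 1) * D := by ring
  -- square it
  have hmul : x ^ (ρ - 1) * x ^ (ρ - 1) = x ^ (2 * ρ - 2) := by
    rw [← Real.rpow_add hx]; ring_nf
  have hN2 : N ^ 2 ≤ C ^ 2 * x ^ (2 * ρ - 2) * D ^ 2 := by
    have h2 : |N| ^ 2 ≤ (C * x ^ (ρ - 1) * D) ^ 2 :=
      pow_le_pow_left₀ (abs_nonneg _) hNabs 2
    rw [sq_abs] at h2
    calc N ^ 2 ≤ (C * x ^ (ρ - 1) * D) ^ 2 := h2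
      _ = C ^ 2 * (x ^ (ρ - 1) * x ^ (ρ - 1)) * D ^ 2 := by ring
      _ = C ^ 2 * x ^ (2 * ρ - 2) * D ^ 2 := by rw [hmul]
  -- the key pointwise bound
  have hterm2 : ((v - 1) / 2) * (N / D ^ 2) ^ 2 ≤ K * x ^ (2 * ρ - 2) / D ^ 2 := by
    rw [div_pow, ← mul_div_assoc, div_le_div_iff₀ (by positivity) hD2]
    calc ((v - 1) / 2) * N ^ 2 * D ^ 2
        ≤ ((v - 1) / 2) * (C ^ 2 * x ^ (2 * ρ - 2) * D ^ 2) * D ^ 2 :=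
          mul_le_mul_of_nonneg_right (mul_le_mul_of_nonneg_left hN2 hv2.le) hD2.le
      _ = K * x ^ (2 * ρ - 2) * (D ^ 2) ^ 2 := by rw [hK_def]; ring
  have hkey : (-α₂ * r * x ^ (r - 1)) / D ^ 2 + ((v - 1) / 2) * (N / D ^ 2) ^ 2
      ≤ (K * x ^ (2 * ρ - 2) - α₂ * r * x ^ (r - 1)) / D ^ 2 := by
    have : (K * x ^ (2 * ρ - 2) - α₂ * r * x ^ (r - 1)) / D ^ 2
        = (-α₂ * r * x ^ (r - 1)) / D ^ 2 + K * x ^ (2 * ρ - 2) / D ^ 2 := by ring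
    rw [this]
    linarith [hterm2]
  -- bound φ := K x^(2ρ-2) - α₂ r x^(r-1) by L₃
  have hφ : K * x ^ (2 * ρ - 2) - α₂ * r * x ^ (r - 1) ≤ K * X ^ (2 * ρ - 2) := by
    rcases le_total x X with hxX | hXx
    · have hmono : x ^ (2 * ρ - 2) ≤ X ^ (2 * ρ - 2) :=
        rpow_le_rpow hx.le hxX (by linarith)
      linarith [mul_le_mul_of_nonneg_left hmono hK.le, mul_pos (mul_pos hα₂ hrpos) hxr1]
    · -- X ≤ x : the drift dominates
      have h1 : x ^ (2 * ρ - 2) = x ^ (-e) * x ^ (r - 1) := by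
        rw [← Real.rpow_add hx]; congr 1; simp only [he_def]; ring
      have hXe : 0 < X ^ e := rpow_pos_of_pos hX0 _
      have hAe : 0 < A ^ e := rpow_pos_of_pos hA _
      have hxe : 0 < x ^ e := rpow_pos_of_pos hx _
      have hm1 : X ^ e ≤ x ^ e := rpow_le_rpow hX0.le hXx he.le
      have hm2 : A ^ e ≤ X ^ e := rpow_le_rpow hA.le (le_max_right 1 A) he.le
      have hAeval : A ^ e = K / (α₂ * r) := by
        rw [hA_def, ← Real.rpow_mul hKα.le, one_div, inv_mul_cancel₀ (ne_of_gt he),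
          Real.rpow_one]
      have hxneg : x ^ (-e) ≤ (α₂ * r) / K := by
        have h3 : K / (α₂ * r) ≤ x ^ e := hAeval ▸ le_trans hm2 hm1
        rw [Real.rpow_neg hx.le]
        calc (x ^ e)⁻¹ ≤ (K / (α₂ * r))⁻¹ := inv_anti₀ hKα h3
          _ = α₂ * r / K := by rw [inv_div]
      have hdom : K * x ^ (2 * ρ - 2) ≤ α₂ * r * x ^ (r - 1) := by
        rw [h1]
        calc K * (x ^ (-e) * x ^ (r - 1)) ≤ K * ((α₂ * r / K) * x ^ (r - 1)) := by
              exact mul_le_mul_of_nonneg_left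
                (mul_le_mul_of_nonneg_right hxneg hxr1.le) hK.le
          _ = α₂ * r * x ^ (r - 1) := by field_simp
      linarith [hL3]
  have hfin : (K * x ^ (2 * ρ - 2) - α₂ * r * x ^ (r - 1)) / D ^ 2 ≤ K * X ^ (2 * ρ - 2) := by
    rcases le_or_gt (K * x ^ (2 * ρ - 2) - α₂ * r * x ^ (r - 1)) 0 with hneg | hpos
    · calc _ ≤ (0:ℝ) := div_nonpos_iff.2 (Or.inr ⟨hneg, hD2.le⟩)
        _ ≤ _ := hL3
    · calc _ ≤ K * x ^ (2 * ρ - 2) - α₂ * r * x ^ (r - 1) :=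
          div_le_self hpos.le (by linarith only [sq_nonneg (D - 1), hD1])
        _ ≤ _ := hφ
  calc (-α₂ * r * x ^ (r - 1)) / D ^ 2 + ((v - 1) / 2) * (N / D ^ 2) ^ 2
      ≤ (K * x ^ (2 * ρ - 2) - α₂ * r * x ^ (r - 1)) / D ^ 2 := hkey
    _ ≤ K * X ^ (2 * ρ - 2) := hfin
end

section
/- Let α₂, σ > 0, r > 1, v > 2 be real numbers, set ρ = (r+1)/2, and assume α₂ r ≥ ((v-1)/2)·σ² ρ². Then for all h > 0 and all x > 0, (-α₂ r x^{r-1})/(1 + h^{1/2} x^r)² + ((v-1)/2)·((σ ρ x^{ρ-1} - σ (r - ρ) h^{1/2} x^{r+ρ-1})/(1 + h^{1/2} x^r)²)² ≤ 0. -/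
/-- **Critical case `r + 1 = 2ρ`.**
For `α₂, σ > 0`, `r > 1`, `v > 2`, `ρ = (r+1)/2`, assuming `α₂ r ≥ ((v-1)/2) σ² ρ²`, one has
for all step sizes `h > 0` and all `x > 0` that
`f_h'(x) + ((v-1)/2)|g_h'(x)|² ≤ 0`, where `f_h'(x) = -α₂ r x^(r-1)/(1 + h^(1/2) x^r)²`
and `g_h'(x) = (σ ρ x^(ρ-1) - σ (r-ρ) h^(1/2) x^(r+ρ-1))/(1 + h^(1/2) x^r)²`. -/
theorem stmt_6 (α₂ σ r ρ v : ℝ) (hα₂ : 0 < α₂) (hσ : 0 < σ) (hr : 1 < r) (hv : 2 < v)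
    (hρ : ρ = (r + 1) / 2) (hmono : α₂ * r ≥ ((v - 1) / 2) * σ ^ 2 * ρ ^ 2) :
    ∀ h : ℝ, 0 < h → ∀ x : ℝ, 0 < x →
      (-α₂ * r * x ^ (r - 1)) / (1 + h ^ ((1 : ℝ) / 2) * x ^ r) ^ 2
        + ((v - 1) / 2) *
          ((σ * ρ * x ^ (ρ - 1) - σ * (r - ρ) * h ^ ((1 : ℝ) / 2) * x ^ (r + ρ - 1))
              / (1 + h ^ ((1 : ℝ) / 2) * x ^ r) ^ 2) ^ 2
        ≤ 0 := by
  intro h hh x hx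
  have hBr : x ^ (r + ρ - 1) = x ^ (ρ - 1) * x ^ r := by
    rw [← Real.rpow_add hx]; ring_nf
  have hB2 : x ^ (ρ - 1) * x ^ (ρ - 1) = x ^ (r - 1) := by
    rw [← Real.rpow_add hx]; congr 1; rw [hρ]; ring
  have hs : (0:ℝ) ≤ h ^ ((1:ℝ)/2) * x ^ r := by positivity
  have hA : (0:ℝ) < x ^ (r - 1) := Real.rpow_pos_of_pos hx _
  set s := h ^ ((1:ℝ)/2) * x ^ r with hsdef
  set A := x ^ (r - 1) with hAdef
  set B := x ^ (ρ - 1) with hBdef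
  have hD : (0:ℝ) < 1 + s := by linarith
  rw [hBr]
  have key : ((v - 1) / 2) * (σ * ρ * B - σ * (r - ρ) * h ^ ((1:ℝ)/2) * (B * x ^ r)) ^ 2
      ≤ α₂ * r * A * (1 + s) ^ 2 := by
    have hexp : σ * ρ * B - σ * (r - ρ) * h ^ ((1:ℝ)/2) * (B * x ^ r)
        = σ * B * (ρ - (r - ρ) * s) := by rw [hsdef]; ring
    rw [hexp]
    have hrρ : 0 ≤ r - ρ := by rw [hρ]; linarith
    have hρpos : r - ρ ≤ ρ := by rw [hρ]; linarith
    have hsq : (ρ - (r - ρ) * s) ^ 2 ≤ ρ ^ 2 * (1 + s) ^ 2 := by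
      nlinarith [mul_self_le_mul_self hrρ hρpos, mul_nonneg hs hs,
        mul_nonneg (mul_nonneg hrρ (hrρ.trans hρpos)) hs,
        mul_le_mul_of_nonneg_right (mul_self_le_mul_self hrρ hρpos) (mul_nonneg hs hs)]
    have hB2' : B ^ 2 = A := by rw [sq, hB2]
    have h1 : (σ * B * (ρ - (r - ρ) * s)) ^ 2 = σ ^ 2 * A * (ρ - (r - ρ) * s) ^ 2 := by
      rw [mul_pow, mul_pow, hB2']
    rw [h1]
    have hc : (0:ℝ) < (v - 1) / 2 := by linarith
    calc ((v - 1) / 2) * (σ ^ 2 * A * (ρ - (r - ρ) * s) ^ 2)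
        ≤ ((v - 1) / 2) * (σ ^ 2 * A * (ρ ^ 2 * (1 + s) ^ 2)) := by
          apply mul_le_mul_of_nonneg_left _ hc.le
          apply mul_le_mul_of_nonneg_left hsq (by positivity)
      _ = (((v - 1) / 2) * σ ^ 2 * ρ ^ 2) * A * (1 + s) ^ 2 := by ring
      _ ≤ α₂ * r * A * (1 + s) ^ 2 := by
          apply mul_le_mul_of_nonneg_right _ (by positivity)
          exact mul_le_mul_of_nonneg_right hmono hA.le
  have heq : (-α₂ * r * A) / (1 + s) ^ 2
      + ((v - 1) / 2) *
        ((σ * ρ * B - σ * (r - ρ) * h ^ ((1:ℝ)/2) * (B * x ^ r)) / (1 + s) ^ 2) ^ 2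
      = (-(α₂ * r * A * (1 + s) ^ 2)
          + ((v - 1) / 2) * (σ * ρ * B - σ * (r - ρ) * h ^ ((1:ℝ)/2) * (B * x ^ r)) ^ 2)
        / ((1 + s) ^ 2) ^ 2 := by
    field_simp
  rw [heq]
  apply div_nonpos_of_nonpos_of_nonneg
  · linarith [key]
  · positivity
end

section
/- Let α₂, σ > 0 and r, ρ > 1 be real numbers, and set f(x) = -α₂ x^r, g(x) = σ x^ρ for x > 0. Assume either (a) r + 1 > 2ρ, or (b) r + 1 = 2ρ and α₂/σ² > (1/8)(r + 2 + 1/r). Then there exist constants v > 2 and L₃ ≥ 0 such that for every step size h > 0 and all x, y > 0, (x - y)·(f_h(x) - f_h(y)) + ((v-1)/2)·(g_h(x) - g_h(y))² ≤ L₃ (x - y)², where f_h(x) = f(x)/(1 + h^{1/2} x^r) and g_h(x) = g(x)/(1 + h^{1/2} x^r). -/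
/-!
Write `F = f_h` and `G = g_h`. If `F' + c G'² ≤ L` on an interval, then
`(x - y)(F x - F y) + c (G x - G y)² ≤ L (x - y)²` there: with `λ` the mean slope of `G` between
`y` and `x`, the function `F + 2cλ G` has derivative `F' + 2cλ G' ≤ F' + c G'² + cλ² ≤ L + cλ²`,
and the mean value inequality for it is the claim.

For the tamed coefficients, with `d = 1 + h^{1/2} t^r ≥ 1`,
`F' = -α₂ r t^{r-1} / d²` and `|G'| ≤ σ M t^{ρ-1} / d` with `M = max ρ (r - ρ)`, so
`F' + c G'² ≤ (c σ² M² t^{2ρ-2} - α₂ r t^{r-1}) / d²`, and it suffices to bound the untamed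
quantity `c σ² M² t^{2ρ-2} - α₂ r t^{r-1}` by `L ≥ 0`. In case (a) the exponent `r - 1` dominates
and `c = 1` works; in case (b) the exponents agree, `M = ρ`, and the condition on `α₂ / σ²` is
exactly `c = α₂ r / (σ ρ)² > 1/2`.
-/

theorem mul_sub_add_mul_sq_sub_le_of_hasDerivAt {s : Set ℝ} (hs : Convex ℝ s)
    {F G F' G' : ℝ → ℝ} {c L : ℝ} (hc : 0 ≤ c)
    (hF : ∀ t ∈ s, HasDerivAt F (F' t) t) (hG : ∀ t ∈ s, HasDerivAt G (G' t) t)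
    (hbound : ∀ t ∈ s, F' t + c * G' t ^ 2 ≤ L) {x y : ℝ} (hx : x ∈ s) (hy : y ∈ s) :
    (x - y) * (F x - F y) + c * (G x - G y) ^ 2 ≤ L * (x - y) ^ 2 := by
  wlog hyx : y < x generalizing x y
  · rcases (not_lt.mp hyx).eq_or_lt with rfl | hxy
    · simp
    · linarith [this hy hx hxy]
  set m := (G x - G y) / (x - y)
  have hm : m * (x - y) = G x - G y := div_mul_cancel₀ _ (sub_pos.mpr hyx).ne'
  have hΦ : ∀ t ∈ s, HasDerivAt (fun t => F t + 2 * c * m * G t) (F' t + 2 * c * m * G' t) t :=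
    fun t ht => (hF t ht).add ((hG t ht).const_mul _)
  have hΦ_le : ∀ t ∈ interior s, deriv (fun t => F t + 2 * c * m * G t) t ≤ L + c * m ^ 2 := by
    intro t ht
    rw [(hΦ t (interior_subset ht)).deriv]
    nlinarith [hbound t (interior_subset ht), mul_nonneg hc (sq_nonneg (G' t - m))]
  have hmvt := hs.image_sub_le_mul_sub_of_deriv_le
    (fun t ht => (hΦ t ht).continuousAt.continuousWithinAt)
    (fun t ht => (hΦ t (interior_subset ht)).differentiableAt.differentiableWithinAt)
    hΦ_le y hy x hx hyx.le
  have := mul_le_mul_of_nonneg_left hmvt (sub_pos.mpr hyx).le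
  linear_combination this + c * (m * (x - y) - (G x - G y)) * hm

noncomputable def tamed (a p r u t : ℝ) : ℝ := a * t ^ p / (1 + u * t ^ r)

noncomputable def tamedDeriv (a p r u t : ℝ) : ℝ :=
  a * t ^ (p - 1) * (p + (p - r) * (u * t ^ r)) / (1 + u * t ^ r) ^ 2

theorem hasDerivAt_tamed (a p r : ℝ) {u t : ℝ} (hu : 0 ≤ u) (ht : 0 < t) :
    HasDerivAt (tamed a p r u) (tamedDeriv a p r u t) t := by
  have hd : 1 + u * t ^ r ≠ 0 := by positivity
  have hsplit : t ^ p * t ^ (r - 1) = t ^ (p - 1) * t ^ r := by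
    rw [← Real.rpow_add ht, ← Real.rpow_add ht]; ring_nf
  refine (((Real.hasDerivAt_rpow_const (Or.inl ht.ne')).const_mul a).fun_div
    (((Real.hasDerivAt_rpow_const (Or.inl ht.ne')).const_mul u).const_add 1) hd).congr_deriv ?_
  rw [tamedDeriv]
  congr 1
  linear_combination -(a * u * r) * hsplit

theorem sq_add_sub_mul_le {ρ r w : ℝ} (hρ : 0 ≤ ρ) (hρr : ρ ≤ r) (hw : 0 ≤ w) :
    (ρ + (ρ - r) * w) ^ 2 ≤ (max ρ (r - ρ) * (1 + w)) ^ 2 := by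
  have h₁ := le_max_left ρ (r - ρ)
  have h₂ := le_max_right ρ (r - ρ)
  apply sq_le_sq' <;> nlinarith

theorem tamedDeriv_add_mul_sq_le {α σ r ρ c L u t : ℝ} (hρ : 0 ≤ ρ) (hρr : ρ ≤ r)
    (hc : 0 ≤ c) (hL : 0 ≤ L) (hu : 0 ≤ u) (ht : 0 < t)
    (huntamed : c * (σ * max ρ (r - ρ)) ^ 2 * t ^ (2 * ρ - 2) ≤ α * r * t ^ (r - 1) + L) :
    tamedDeriv (-α) r r u t + c * tamedDeriv σ ρ r u t ^ 2 ≤ L := by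
  set d := 1 + u * t ^ r
  set e := ρ + (ρ - r) * (u * t ^ r)
  set M := max ρ (r - ρ)
  have hd : 1 ≤ d := le_add_of_nonneg_right (by positivity)
  have he : e ^ 2 / d ^ 2 ≤ M ^ 2 := by
    rw [div_le_iff₀ (by positivity), ← mul_pow]
    exact sq_add_sub_mul_le hρ hρr (by positivity)
  have htp : (t ^ (ρ - 1)) ^ 2 = t ^ (2 * ρ - 2) := by
    rw [← Real.rpow_natCast, ← Real.rpow_mul ht.le]; ring_nf
  calc tamedDeriv (-α) r r u t + c * tamedDeriv σ ρ r u t ^ 2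
      = (c * σ ^ 2 * t ^ (2 * ρ - 2) * (e ^ 2 / d ^ 2) - α * r * t ^ (r - 1)) / d ^ 2 := by
        simp only [tamedDeriv, sub_self, zero_mul, add_zero, ← htp]
        field_simp
        ring
    _ ≤ (c * σ ^ 2 * t ^ (2 * ρ - 2) * M ^ 2 - α * r * t ^ (r - 1)) / d ^ 2 := by gcongr
    _ ≤ L / d ^ 2 := by gcongr; linarith
    _ ≤ L := div_le_self hL (one_le_pow₀ hd)

theorem exists_mul_rpow_le_mul_rpow_add {a b B C : ℝ} (ha : 0 ≤ a) (hab : a < b) (hB : 0 < B)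
    (hC : 0 ≤ C) : ∃ K, 0 ≤ K ∧ ∀ t, 0 < t → C * t ^ a ≤ B * t ^ b + K := by
  set T := (C / B) ^ (b - a)⁻¹
  have hT : 0 ≤ T := by positivity
  refine ⟨C * T ^ a, by positivity, fun t ht => ?_⟩
  rcases le_total t T with htT | hTt
  · have : C * t ^ a ≤ C * T ^ a := by gcongr
    have : 0 ≤ B * t ^ b := by positivity
    linarith
  · have hCB : C / B ≤ t ^ (b - a) := by
      calc C / B = T ^ (b - a) := by
            rw [← Real.rpow_mul (by positivity), inv_mul_cancel₀ (by linarith), Real.rpow_one]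
        _ ≤ t ^ (b - a) := by gcongr
    have htb : t ^ b = t ^ (b - a) * t ^ a := by rw [← Real.rpow_add ht]; ring_nf
    have : C ≤ B * t ^ (b - a) := by rwa [div_le_iff₀' hB] at hCB
    have : C * t ^ a ≤ B * t ^ b := by
      rw [htb, ← mul_assoc]; gcongr
    have : 0 ≤ C * T ^ a := by positivity
    linarith

theorem exists_untamed_bound {α σ r ρ : ℝ} (hα : 0 < α) (hσ : 0 < σ) (hρ : 1 ≤ ρ)
    (hcase : r + 1 > 2 * ρ ∨ (r + 1 = 2 * ρ ∧ α / σ ^ 2 > (1 / 8) * (r + 2 + 1 / r))) :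
    ∃ c, 1 / 2 < c ∧ ∃ L, 0 ≤ L ∧ ∀ t, 0 < t →
      c * (σ * max ρ (r - ρ)) ^ 2 * t ^ (2 * ρ - 2) ≤ α * r * t ^ (r - 1) + L := by
  rcases hcase with hlt | ⟨heq, hratio⟩
  · obtain ⟨K, hK, hbound⟩ := exists_mul_rpow_le_mul_rpow_add (a := 2 * ρ - 2) (b := r - 1)
      (B := α * r) (C := (σ * max ρ (r - ρ)) ^ 2) (by linarith) (by linarith)
      (mul_pos hα (by linarith)) (sq_nonneg _)
    exact ⟨1, by norm_num, K, hK, fun t ht => by simpa using hbound t ht⟩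
  · have hr : 0 < r := by linarith
    have hM : max ρ (r - ρ) = ρ := max_eq_left (by linarith)
    -- with `ρ = (r + 1) / 2`, the hypothesis reads `α r > (σ ρ)² / 2`
    have hαr : (σ * ρ) ^ 2 / 2 < α * r := by
      have hρ' : ρ = (r + 1) / 2 := by linarith
      have h8 : (1 / 8) * (r + 2 + 1 / r) = (r + 1) ^ 2 / (8 * r) := by field_simp; ring
      rw [h8, gt_iff_lt, lt_div_iff₀ (by positivity), div_mul_eq_mul_div,
        div_lt_iff₀ (by positivity)] at hratio
      rw [hρ']
      nlinarith
    refine ⟨α * r / (σ * ρ) ^ 2, by rw [lt_div_iff₀ (by positivity)]; linarith, 0, le_rfl,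
      fun t _ => ?_⟩
    rw [hM, show 2 * ρ - 2 = r - 1 by linarith, div_mul_cancel₀ _ (by positivity), add_zero]

theorem stmt_7_general (α₂ σ r ρ : ℝ) (hα₂ : 0 < α₂) (hσ : 0 < σ) (hρ : 1 < ρ)
    (hcase : r + 1 > 2 * ρ ∨ (r + 1 = 2 * ρ ∧ α₂ / σ ^ 2 > (1 / 8) * (r + 2 + 1 / r))) :
    ∃ v : ℝ, 2 < v ∧ ∃ L₃ : ℝ, 0 ≤ L₃ ∧ ∀ h : ℝ, 0 < h → ∀ x : ℝ, 0 < x → ∀ y : ℝ, 0 < y →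
      (x - y) * ((-α₂ * x ^ r) / (1 + h ^ ((1 : ℝ) / 2) * x ^ r)
            - (-α₂ * y ^ r) / (1 + h ^ ((1 : ℝ) / 2) * y ^ r))
        + ((v - 1) / 2) * ((σ * x ^ ρ) / (1 + h ^ ((1 : ℝ) / 2) * x ^ r)
            - (σ * y ^ ρ) / (1 + h ^ ((1 : ℝ) / 2) * y ^ r)) ^ 2
        ≤ L₃ * (x - y) ^ 2 := by
  have hρr : ρ ≤ r := by rcases hcase with h | ⟨h, -⟩ <;> linarith
  obtain ⟨c, hc, L, hL, huntamed⟩ := exists_untamed_bound hα₂ hσ hρ.le hcase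
  refine ⟨2 * c + 1, by linarith, L, hL, fun h hh x hx y hy => ?_⟩
  have hu : 0 ≤ h ^ ((1 : ℝ) / 2) := by positivity
  rw [show (2 * c + 1 - 1) / 2 = c by ring]
  exact mul_sub_add_mul_sq_sub_le_of_hasDerivAt (convex_Ioi 0) (by linarith)
    (fun t ht => hasDerivAt_tamed _ _ _ hu ht) (fun t ht => hasDerivAt_tamed _ _ _ hu ht)
    (fun t ht => tamedDeriv_add_mul_sq_le (by linarith) hρr (by linarith) hL hu ht
      (huntamed t ht)) hx hy

/-- **One-sided Lipschitz condition for the tamed scheme (Example 3.2).**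
For `α₂, σ > 0`, `r, ρ > 1` with `f x = -α₂ x^r`, `g x = σ x^ρ` (real powers, `x > 0`),
assuming either (a) `r + 1 > 2ρ`, or (b) `r + 1 = 2ρ` and `α₂/σ² > (1/8)(r + 2 + 1/r)`,
there are `v > 2` and `L₃ ≥ 0` such that for every step size `h > 0` and all `x, y > 0`,
`(x-y)(f_h x - f_h y) + ((v-1)/2)(g_h x - g_h y)² ≤ L₃ (x-y)²`, where
`f_h x = f x/(1 + h^(1/2) x^r)` and `g_h x = g x/(1 + h^(1/2) x^r)`. -/
theorem stmt_7 (α₂ σ r ρ : ℝ) (hα₂ : 0 < α₂) (hσ : 0 < σ) (hr : 1 < r) (hρ : 1 < ρ)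
    (hcase : r + 1 > 2 * ρ ∨ (r + 1 = 2 * ρ ∧ α₂ / σ ^ 2 > (1 / 8) * (r + 2 + 1 / r))) :
    ∃ v : ℝ, 2 < v ∧ ∃ L₃ : ℝ, 0 ≤ L₃ ∧ ∀ h : ℝ, 0 < h → ∀ x : ℝ, 0 < x → ∀ y : ℝ, 0 < y →
      (x - y) * ((-α₂ * x ^ r) / (1 + h ^ ((1 : ℝ) / 2) * x ^ r)
            - (-α₂ * y ^ r) / (1 + h ^ ((1 : ℝ) / 2) * y ^ r))
        + ((v - 1) / 2) * ((σ * x ^ ρ) / (1 + h ^ ((1 : ℝ) / 2) * x ^ r)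
            - (σ * y ^ ρ) / (1 + h ^ ((1 : ℝ) / 2) * y ^ r)) ^ 2
        ≤ L₃ * (x - y) ^ 2 :=
  stmt_7_general α₂ σ r ρ hα₂ hσ hρ hcase
end

section
/- Let r > 1 be a real number and κ a real number with κ ≥ 1/(2r). For every step size h > 0 define the projection 𝒫_h(x) = min{1, h^{-κ} x^{-1}}·x = min{x, h^{-κ}} for x > 0. Then for all x > 0, |x - 𝒫_h(x)| ≤ 2 h^{1/2} (1 + x^{r+1}). -/
/-- For `r > 1`, `κ ≥ 1/(2r)` and any step size `h > 0`, the projection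
`𝒫_h x = min x (h^(-κ))` (real powers) satisfies, for all `x > 0`,
`|x - 𝒫_h x| ≤ 2 * h^(1/2) (1 + x^(r+1))`. -/
theorem stmt_9 (r κ h : ℝ) (hr : 1 < r) (hκ : 1 / (2 * r) ≤ κ) (hh : 0 < h) :
    ∀ x : ℝ, 0 < x →
      |x - min x (h ^ (-κ))| ≤ 2 * h ^ ((1 : ℝ) / 2) * (1 + x ^ (r + 1)) := by
  intro x hx
  have hκ0 : 0 < κ := lt_of_lt_of_le (by positivity) hκ
  rcases le_total x (h ^ (-κ)) with hle | hge
  · rw [min_eq_left hle, sub_self, abs_zero]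
    positivity
  · rw [min_eq_right hge]
    have hhx : (0:ℝ) < h ^ (-κ) := Real.rpow_pos_of_pos hh _
    rw [abs_of_nonneg (by linarith)]
    have key : x ≤ h ^ ((1:ℝ)/2) * (1 + x ^ (r + 1)) := by
      -- 1 ≤ h^κ * x
      have h1 : (1:ℝ) ≤ h ^ κ * x := by
        have := mul_le_mul_of_nonneg_left hge (le_of_lt (Real.rpow_pos_of_pos hh κ))
        rwa [← Real.rpow_add hh, add_neg_cancel, Real.rpow_zero] at this
      -- raise to power 1/(2κ)
      have h2 : (1:ℝ) ≤ h ^ ((1:ℝ)/2) * x ^ (1/(2*κ)) := by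
        have := Real.rpow_le_rpow (by norm_num) h1 (le_of_lt (by positivity : (0:ℝ) < 1/(2*κ)))
        rwa [Real.one_rpow, Real.mul_rpow (by positivity) hx.le,
          ← Real.rpow_mul hh.le, show κ * (1/(2*κ)) = (1:ℝ)/2 by field_simp] at this
      have h3 : x ≤ h ^ ((1:ℝ)/2) * x ^ (1/(2*κ) + 1) := by
        calc x = x * 1 := (mul_one x).symm
        _ ≤ x * (h ^ ((1:ℝ)/2) * x ^ (1/(2*κ))) := by
            exact mul_le_mul_of_nonneg_left h2 hx.le
        _ = h ^ ((1:ℝ)/2) * x ^ (1/(2*κ) + 1) := by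
            rw [Real.rpow_add hx, Real.rpow_one]; ring
      have hexp : 1/(2*κ) ≤ r := by
        rw [div_le_iff₀ (by positivity)]
        rw [div_le_iff₀ (by positivity)] at hκ
        nlinarith
      have h4 : x ^ (1/(2*κ) + 1) ≤ 1 + x ^ (r + 1) := by
        rcases le_total x 1 with hx1 | hx1
        · have : x ^ (1/(2*κ) + 1) ≤ 1 :=
            Real.rpow_le_one hx.le hx1 (by positivity)
          nlinarith [Real.rpow_nonneg hx.le (r+1)]
        · have : x ^ (1/(2*κ) + 1) ≤ x ^ (r + 1) :=
            Real.rpow_le_rpow_of_exponent_le hx1 (by linarith)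
          linarith
      calc x ≤ h ^ ((1:ℝ)/2) * x ^ (1/(2*κ) + 1) := h3
      _ ≤ h ^ ((1:ℝ)/2) * (1 + x ^ (r + 1)) := by
          exact mul_le_mul_of_nonneg_left h4 (by positivity)
    have : (0:ℝ) ≤ h ^ ((1:ℝ)/2) * (1 + x ^ (r + 1)) := by positivity
    linarith
end

section
/- Let α₂ > 0, r > 1 and κ ≥ 1/(2r) be real numbers, and let f(x) = -α₂ x^r for x > 0. For every step size h > 0 define 𝒫_h(x) = min{x, h^{-κ}}. Then for all x > 0, |f(x) - f(𝒫_h(x))| ≤ 2 α₂ r h^{1/2} (1 + x^{2r}). -/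
/-- For `f x = -α₂ x^r` (`α₂ > 0`, `r > 1`, real powers, `x > 0`), `κ ≥ 1/(2r)`, and any
step size `h > 0`, the projection `𝒫_h x = min x (h^(-κ))` satisfies, for all `x > 0`,
`|f x - f (𝒫_h x)| ≤ 2 α₂ r h^(1/2) (1 + x^(2r))`. -/
theorem stmt_10 (α₂ r κ h : ℝ) (hα₂ : 0 < α₂) (hr : 1 < r) (hκ : 1 / (2 * r) ≤ κ)
    (hh : 0 < h) :
    ∀ x : ℝ, 0 < x →
      |(-α₂ * x ^ r) - (-α₂ * (min x (h ^ (-κ))) ^ r)|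
        ≤ 2 * α₂ * r * h ^ ((1 : ℝ) / 2) * (1 + x ^ (2 * r)) := by
  intro x hx
  have hx2r : 0 < x ^ (2 * r) := Real.rpow_pos_of_pos hx _
  have hh2 : 0 < h ^ ((1 : ℝ) / 2) := Real.rpow_pos_of_pos hh _
  have hxr : 0 < x ^ r := Real.rpow_pos_of_pos hx _
  rcases le_or_gt x (h ^ (-κ)) with hle | hlt
  · rw [min_eq_left hle, sub_self, abs_zero]
    positivity
  · rw [min_eq_right hlt.le]
    have hp : (0 : ℝ) < h ^ (-κ) := Real.rpow_pos_of_pos hh _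
    have hmono : (h ^ (-κ)) ^ r ≤ x ^ r :=
      Real.rpow_le_rpow hp.le hlt.le (by linarith)
    have hpr : 0 < (h ^ (-κ)) ^ r := Real.rpow_pos_of_pos hp r
    have habs : |(-α₂ * x ^ r) - (-α₂ * (h ^ (-κ)) ^ r)|
        = α₂ * (x ^ r - (h ^ (-κ)) ^ r) := by
      rw [abs_of_nonpos (by nlinarith [mul_le_mul_of_nonneg_left hmono hα₂.le])]; ring
    rw [habs]
    have key : x ^ r ≤ 2 * r * h ^ ((1 : ℝ) / 2) * (1 + x ^ (2 * r)) := by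
      rcases le_or_gt 1 h with h1 | h1
      · have hge1 : (1 : ℝ) ≤ h ^ ((1 : ℝ) / 2) := Real.one_le_rpow h1 (by norm_num)
        have hxr1 : x ^ r ≤ 1 + x ^ (2 * r) := by
          rcases le_or_gt x 1 with hx1 | hx1
          · have : x ^ r ≤ 1 := Real.rpow_le_one hx.le hx1 (by linarith)
            linarith
          · have : x ^ r ≤ x ^ (2 * r) :=
              Real.rpow_le_rpow_of_exponent_le hx1.le (by linarith)
            linarith
        have t1 : x ^ r ≤ h ^ ((1 : ℝ) / 2) * (1 + x ^ (2 * r)) := by nlinarith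
        nlinarith [mul_pos hh2 (show (0:ℝ) < 1 + x ^ (2 * r) by positivity)]
      · have hκle : h ^ (-(1 / (2 * r))) ≤ h ^ (-κ) :=
          Real.rpow_le_rpow_of_exponent_ge hh h1.le (by linarith)
        have hxgt : h ^ (-(1 / (2 * r))) < x := lt_of_le_of_lt hκle hlt
        have hq : (0 : ℝ) < h ^ (-(1 / (2 * r))) := Real.rpow_pos_of_pos hh _
        have hxrgt : (h ^ (-(1 / (2 * r)))) ^ r ≤ x ^ r :=
          Real.rpow_le_rpow hq.le hxgt.le (by linarith)
        have hr0 : r ≠ 0 := by linarith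
        have heq : (h ^ (-(1 / (2 * r)))) ^ r = h ^ (-(1 / 2) : ℝ) := by
          rw [← Real.rpow_mul hh.le]
          congr 1
          field_simp
        rw [heq] at hxrgt
        have hone : (1 : ℝ) ≤ h ^ ((1 : ℝ) / 2) * x ^ r := by
          have := mul_le_mul_of_nonneg_left hxrgt hh2.le
          rwa [← Real.rpow_add hh, show (1:ℝ)/2 + -(1/2) = 0 by ring, Real.rpow_zero] at this
        have hmul : x ^ r * x ^ r = x ^ (2 * r) := by
          rw [← Real.rpow_add hx]; ring_nf
        have t1 : x ^ r ≤ h ^ ((1 : ℝ) / 2) * x ^ (2 * r) := by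
          calc x ^ r = 1 * x ^ r := (one_mul _).symm
            _ ≤ (h ^ ((1 : ℝ) / 2) * x ^ r) * x ^ r :=
                mul_le_mul_of_nonneg_right hone hxr.le
            _ = h ^ ((1 : ℝ) / 2) * x ^ (2 * r) := by rw [mul_assoc, hmul]
        nlinarith [mul_pos hh2 hx2r, mul_pos hh2 (show (0:ℝ) < 1 + x ^ (2 * r) by positivity)]
    nlinarith
end

section
/- Let σ > 0 and r, ρ > 1 be real numbers with 2ρ ≤ r + 1, let κ ≥ 1/(2r), and let g(x) = σ x^ρ for x > 0. For every step size h > 0 define 𝒫_h(x) = min{x, h^{-κ}}. Then for all x > 0, |g(x) - g(𝒫_h(x))| ≤ 2 σ ρ h^{1/2} (1 + x^{2r}). -/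
/-- For `g x = σ x^ρ` (`σ > 0`, `r, ρ > 1`, `2ρ ≤ r + 1`, real powers, `x > 0`),
`κ ≥ 1/(2r)`, and any step size `h > 0`, the projection `𝒫_h x = min x (h^(-κ))`
satisfies, for all `x > 0`, `|g x - g (𝒫_h x)| ≤ 2 σ ρ h^(1/2) (1 + x^(2r))`. -/
theorem stmt_11 (σ r ρ κ h : ℝ) (hσ : 0 < σ) (hr : 1 < r) (hρ : 1 < ρ)
    (hrel : 2 * ρ ≤ r + 1) (hκ : 1 / (2 * r) ≤ κ) (hh : 0 < h) :
    ∀ x : ℝ, 0 < x →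
      |(σ * x ^ ρ) - (σ * (min x (h ^ (-κ))) ^ ρ)|
        ≤ 2 * σ * ρ * h ^ ((1 : ℝ) / 2) * (1 + x ^ (2 * r)) := by
  intro x hx
  have hx2r : (0:ℝ) < x ^ (2*r) := Real.rpow_pos_of_pos hx _
  have hhalf : (0:ℝ) < h ^ ((1:ℝ)/2) := Real.rpow_pos_of_pos hh _
  rcases le_or_gt x (h ^ (-κ)) with hxM | hMx
  · rw [min_eq_left hxM, sub_self, abs_zero]
    positivity
  · rw [min_eq_right hMx.le]
    have hM : (0:ℝ) < h ^ (-κ) := Real.rpow_pos_of_pos hh _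
    have hmono : σ * (h ^ (-κ)) ^ ρ ≤ σ * x ^ ρ := by
      have := Real.rpow_le_rpow hM.le hMx.le (by linarith : (0:ℝ) ≤ ρ)
      nlinarith
    rw [abs_of_nonneg (by linarith)]
    have hMpowpos : (0:ℝ) < (h ^ (-κ)) ^ ρ := Real.rpow_pos_of_pos hM _
    have key : x ^ ρ ≤ 2 * h ^ ((1:ℝ)/2) * (1 + x ^ (2*r)) := by
      rcases le_or_gt 1 h with hh1 | hh1
      · have h1 : (1:ℝ) ≤ h ^ ((1:ℝ)/2) := Real.one_le_rpow hh1 (by norm_num)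
        rcases le_or_gt x 1 with hx1 | hx1
        · have : x ^ ρ ≤ 1 := Real.rpow_le_one hx.le hx1 (by linarith)
          nlinarith
        · have : x ^ ρ ≤ x ^ (2*r) :=
            Real.rpow_le_rpow_of_exponent_le hx1.le (by nlinarith)
          nlinarith
      · -- h < 1
        have hMM : h ^ (-(1/(2*r))) ≤ h ^ (-κ) :=
          Real.rpow_le_rpow_of_exponent_ge hh hh1.le (by linarith)
        have hxlb : h ^ (-(1/(2*r))) < x := lt_of_le_of_lt hMM hMx
        have hx1 : (1:ℝ) < x := by
          have : (1:ℝ) ≤ h ^ (-(1/(2*r))) := by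
            apply Real.one_le_rpow_of_pos_of_le_one_of_nonpos hh hh1.le
            have : (0:ℝ) < 1/(2*r) := by positivity
            linarith
          linarith
        have hx2rlb : h⁻¹ < x ^ (2*r) := by
          have h2r : (0:ℝ) < 2*r := by linarith
          have h0 := Real.rpow_lt_rpow (Real.rpow_pos_of_pos hh _).le hxlb h2r
          rw [← Real.rpow_mul hh.le] at h0
          have heq : (-(1/(2*r))) * (2*r) = -1 := by
            field_simp
          rw [heq, Real.rpow_neg_one] at h0
          exact h0
        have hxr : x ^ ρ ≤ x ^ r := by
          apply Real.rpow_le_rpow_of_exponent_le hx1.le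
          linarith
        have hxrpos : (0:ℝ) < x ^ r := Real.rpow_pos_of_pos hx _
        have hsq : x ^ (2*r) = x ^ r * x ^ r := by
          rw [← Real.rpow_add hx]; ring_nf
        have hhsq : h ^ ((1:ℝ)/2) * h ^ ((1:ℝ)/2) = h := by
          rw [← Real.rpow_add hh]; norm_num
        -- from h⁻¹ < (x^r)^2 get 1 ≤ h^{1/2} * x^r
        have h1 : (1:ℝ) < h * (x ^ r * x ^ r) := by
          rw [← hsq]
          calc (1:ℝ) = h * h⁻¹ := by field_simp
            _ < h * x ^ (2*r) := by
                exact mul_lt_mul_of_pos_left hx2rlb hh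
        have hba : (1:ℝ) ≤ h ^ ((1:ℝ)/2) * x ^ r := by
          nlinarith [mul_pos hhalf hxrpos, sq_nonneg (h ^ ((1:ℝ)/2) * x ^ r - 1)]
        have hstep : x ^ r ≤ h ^ ((1:ℝ)/2) * x ^ (2*r) := by
          rw [hsq]
          nlinarith [mul_le_mul_of_nonneg_right hba hxrpos.le]
        have hfin : h ^ ((1:ℝ)/2) * x ^ (2*r) ≤ 2 * h ^ ((1:ℝ)/2) * (1 + x ^ (2*r)) := by
          nlinarith [mul_pos hhalf hx2r]
        linarith
    have hpos : (0:ℝ) ≤ σ * (2 * h ^ ((1:ℝ)/2) * (1 + x ^ (2*r))) := by positivity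
    calc σ * x ^ ρ - σ * (h ^ (-κ)) ^ ρ ≤ σ * x ^ ρ := by
          linarith [mul_pos hσ hMpowpos]
      _ ≤ σ * (2 * h ^ ((1:ℝ)/2) * (1 + x ^ (2*r))) :=
          mul_le_mul_of_nonneg_left key hσ.le
      _ ≤ ρ * (σ * (2 * h ^ ((1:ℝ)/2) * (1 + x ^ (2*r)))) :=
          le_mul_of_one_le_left hpos hρ.le
      _ = 2 * σ * ρ * h ^ ((1:ℝ)/2) * (1 + x ^ (2*r)) := by ring
end

section
/- Let α₂ > 0, r > 1, T > 0 and κ ∈ [1/(2r), 1/(2r-2)] be real numbers, and let f(x) = -α₂ x^r for x > 0. For every step size 0 < h ≤ T define 𝒫_h(x) = min{x, h^{-κ}}. Then for all x, y > 0, |f(𝒫_h(x)) - f(𝒫_h(y))| ≤ α₂ r h^{-κ(r-1)} |x - y| ≤ α₂ r T^{(1 - κ(2r-2))/2} h^{-1/2} |x - y|. -/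
/-! Clipping at `M = h^(-κ)` is 1-Lipschitz with values in `[0, M]`, where `x ↦ x^r` is
`r M^(r-1)`-Lipschitz by the mean value theorem. For the second bound, write
`h^(-κ(r-1)) = h^((1-κ(2r-2))/2) · h^(-1/2)`; the first exponent is nonnegative, so `h ≤ T`
bounds that factor by `T^((1-κ(2r-2))/2)`. -/

open Real

theorem abs_rpow_sub_rpow_le_of_mem_Icc {r M a b : ℝ} (hr : 1 ≤ r)
    (ha : a ∈ Set.Icc 0 M) (hb : b ∈ Set.Icc 0 M) :
    |a ^ r - b ^ r| ≤ r * M ^ (r - 1) * |a - b| := by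
  have hderiv_le : ∀ x ∈ Set.Icc 0 M, ‖r * x ^ (r - 1)‖ ≤ r * M ^ (r - 1) := by
    rintro x ⟨hx₀, hxM⟩
    rw [Real.norm_eq_abs, abs_of_nonneg (by positivity)]
    gcongr
  simpa only [Real.norm_eq_abs] using (convex_Icc 0 M).norm_image_sub_le_of_norm_hasDerivWithin_le
    (fun x _ => (hasDerivAt_rpow_const (Or.inr hr)).hasDerivWithinAt) hderiv_le hb ha

theorem abs_min_sub_min_const_le (x y M : ℝ) : |min x M - min y M| ≤ |x - y| := by
  simpa using abs_min_sub_min_le_max x M y M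

theorem abs_rpow_min_sub_rpow_min_le {r M x y : ℝ} (hr : 1 ≤ r) (hM : 0 ≤ M)
    (hx : 0 ≤ x) (hy : 0 ≤ y) :
    |min x M ^ r - min y M ^ r| ≤ r * M ^ (r - 1) * |x - y| :=
  calc |min x M ^ r - min y M ^ r|
      ≤ r * M ^ (r - 1) * |min x M - min y M| :=
        abs_rpow_sub_rpow_le_of_mem_Icc hr ⟨le_min hx hM, min_le_right _ _⟩
          ⟨le_min hy hM, min_le_right _ _⟩
    _ ≤ r * M ^ (r - 1) * |x - y| :=
        mul_le_mul_of_nonneg_left (abs_min_sub_min_const_le x y M)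
          (mul_nonneg (by linarith) (rpow_nonneg hM _))

theorem rpow_neg_mul_sub_one_le {κ r h T : ℝ} (hκ : κ * (2 * r - 2) ≤ 1)
    (hh : 0 < h) (hhT : h ≤ T) :
    h ^ (-(κ * (r - 1))) ≤ T ^ ((1 - κ * (2 * r - 2)) / 2) * h ^ (-(1 : ℝ) / 2) := by
  have hsplit : h ^ (-(κ * (r - 1))) = h ^ ((1 - κ * (2 * r - 2)) / 2) * h ^ (-(1 : ℝ) / 2) := by
    rw [← rpow_add hh]; ring_nf
  rw [hsplit]
  gcongr

theorem stmt_12_general (α₂ r T κ h : ℝ) (hα₂ : 0 < α₂) (hr : 1 < r)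
    (hκ₂ : κ ≤ 1 / (2 * r - 2)) (hh : 0 < h) (hhT : h ≤ T) :
    ∀ x : ℝ, 0 < x → ∀ y : ℝ, 0 < y →
      |(-α₂ * (min x (h ^ (-κ))) ^ r) - (-α₂ * (min y (h ^ (-κ))) ^ r)|
          ≤ α₂ * r * h ^ (-(κ * (r - 1))) * |x - y|
        ∧ α₂ * r * h ^ (-(κ * (r - 1))) * |x - y|
          ≤ α₂ * r * T ^ ((1 - κ * (2 * r - 2)) / 2) * h ^ (-(1 : ℝ) / 2) * |x - y| := by
  intro x hx y hy
  have hM : (h ^ (-κ)) ^ (r - 1) = h ^ (-(κ * (r - 1))) := by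
    rw [← rpow_mul hh.le, neg_mul]
  have hκ : κ * (2 * r - 2) ≤ 1 := (le_div_iff₀ (by linarith)).mp hκ₂
  constructor
  · calc |(-α₂ * (min x (h ^ (-κ))) ^ r) - (-α₂ * (min y (h ^ (-κ))) ^ r)|
        = α₂ * |min x (h ^ (-κ)) ^ r - min y (h ^ (-κ)) ^ r| := by
          rw [← mul_sub, abs_mul, abs_neg, abs_of_pos hα₂]
      _ ≤ α₂ * (r * (h ^ (-κ)) ^ (r - 1) * |x - y|) := by
          gcongr
          exact abs_rpow_min_sub_rpow_min_le hr.le (rpow_nonneg hh.le _) hx.le hy.le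
      _ = α₂ * r * h ^ (-(κ * (r - 1))) * |x - y| := by rw [hM]; ring
  · calc α₂ * r * h ^ (-(κ * (r - 1))) * |x - y|
        ≤ α₂ * r * (T ^ ((1 - κ * (2 * r - 2)) / 2) * h ^ (-(1 : ℝ) / 2)) * |x - y| := by
          gcongr α₂ * r * ?_ * |x - y|
          exact rpow_neg_mul_sub_one_le hκ hh hhT
      _ = α₂ * r * T ^ ((1 - κ * (2 * r - 2)) / 2) * h ^ (-(1 : ℝ) / 2) * |x - y| := by ring

/-- For `f x = -α₂ x^r` (`α₂ > 0`, `r > 1`, real powers, `x > 0`), `T > 0`,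
`κ ∈ [1/(2r), 1/(2r-2)]`, and a step size `0 < h ≤ T`, the projection
`𝒫_h x = min x (h^(-κ))` satisfies, for all `x, y > 0`,
`|f (𝒫_h x) - f (𝒫_h y)| ≤ α₂ r h^(-κ(r-1)) |x - y| ≤ α₂ r T^((1-κ(2r-2))/2) h^(-1/2) |x - y|`. -/
theorem stmt_12 (α₂ r T κ h : ℝ) (hα₂ : 0 < α₂) (hr : 1 < r) (hT : 0 < T)
    (hκ₁ : 1 / (2 * r) ≤ κ) (hκ₂ : κ ≤ 1 / (2 * r - 2)) (hh : 0 < h) (hhT : h ≤ T) :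
    ∀ x : ℝ, 0 < x → ∀ y : ℝ, 0 < y →
      |(-α₂ * (min x (h ^ (-κ))) ^ r) - (-α₂ * (min y (h ^ (-κ))) ^ r)|
          ≤ α₂ * r * h ^ (-(κ * (r - 1))) * |x - y|
        ∧ α₂ * r * h ^ (-(κ * (r - 1))) * |x - y|
          ≤ α₂ * r * T ^ ((1 - κ * (2 * r - 2)) / 2) * h ^ (-(1 : ℝ) / 2) * |x - y| :=
  stmt_12_general α₂ r T κ h hα₂ hr hκ₂ hh hhT
end

section
/- Let α₂, σ > 0 and r, ρ > 1 be real numbers, set f(x) = -α₂ x^r and g(x) = σ x^ρ for x > 0, and let κ be a real number. Assume there exist q > 2 and L > 0 such that f'(x) + ((q-1)/2)|g'(x)|² ≤ L for all x > 0 (i.e., -α₂ r x^{r-1} + ((q-1)/2)σ²ρ² x^{2ρ-2} ≤ L). Then for every step size h > 0 and all x, y > 0, (x - y)·(f(𝒫_h(x)) - f(𝒫_h(y))) + ((q-1)/2)·(g(𝒫_h(x)) - g(𝒫_h(y)))² ≤ L (x - y)², where 𝒫_h(x) = min{x, h^{-κ}}. -/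
/-!
For `b ≤ a` write `f a - f b = ∫_b^a f'` and `g a - g b = ∫_b^a g'`. Cauchy–Schwarz gives
`(∫_b^a g')² ≤ (a - b) ∫_b^a g'²`, so the left-hand side is at most
`(a - b) ∫_b^a (f' + c g'²) ≤ L (a - b)²`. The projection `𝒫_h` is monotone and 1-Lipschitz and `f`
is decreasing, so `(x - y)(f (𝒫_h x) - f (𝒫_h y)) ≤ (𝒫_h x - 𝒫_h y)(f (𝒫_h x) - f (𝒫_h y))` and
`L (𝒫_h x - 𝒫_h y)² ≤ L (x - y)²`.
-/

open intervalIntegral Set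
open MeasureTheory (volume)

lemma sq_integral_le_mul_integral_sq {ψ : ℝ → ℝ} {a b : ℝ} (hba : b ≤ a)
    (hψ : IntervalIntegrable ψ volume b a) (hψ2 : IntervalIntegrable (fun t => ψ t ^ 2) volume b a) :
    (∫ t in b..a, ψ t) ^ 2 ≤ (a - b) * ∫ t in b..a, ψ t ^ 2 := by
  rcases hba.eq_or_lt with rfl | hlt
  · simp
  set I := ∫ t in b..a, ψ t
  set m := I / (a - b)
  have hvar : 0 ≤ ∫ t in b..a, (ψ t ^ 2 - (2 * m) * ψ t + m ^ 2) :=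
    integral_nonneg hba fun t _ => by nlinarith [sq_nonneg (ψ t - m)]
  rw [integral_add (hψ2.sub (hψ.const_mul _)) intervalIntegrable_const,
    integral_sub hψ2 (hψ.const_mul _), integral_const_mul, integral_const, smul_eq_mul] at hvar
  have hm : m * (a - b) = I := div_mul_cancel₀ I (sub_pos.2 hlt).ne'
  nlinarith

lemma sub_mul_sub_add_mul_sq_sub_le_of_deriv {f g f' g' : ℝ → ℝ} {a b c L : ℝ} (hba : b ≤ a)
    (hc : 0 ≤ c) (hf : ∀ t ∈ Icc b a, HasDerivAt f (f' t) t)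
    (hg : ∀ t ∈ Icc b a, HasDerivAt g (g' t) t)
    (hf' : ContinuousOn f' (Icc b a)) (hg' : ContinuousOn g' (Icc b a))
    (hbound : ∀ t ∈ Icc b a, f' t + c * g' t ^ 2 ≤ L) :
    (a - b) * (f a - f b) + c * (g a - g b) ^ 2 ≤ L * (a - b) ^ 2 := by
  rw [← uIcc_of_le hba] at hf hg hf' hg'
  have hf'i := hf'.intervalIntegrable (μ := volume)
  have hg'i := hg'.intervalIntegrable (μ := volume)
  have hg'2i : IntervalIntegrable (fun t => g' t ^ 2) volume b a := (hg'.pow 2).intervalIntegrable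
  rw [← integral_eq_sub_of_hasDerivAt hf hf'i, ← integral_eq_sub_of_hasDerivAt hg hg'i]
  have hL : ∫ t in b..a, (f' t + c * g' t ^ 2) ≤ ∫ _ in b..a, L :=
    integral_mono_on hba (hf'i.add (hg'2i.const_mul c)) intervalIntegrable_const hbound
  rw [integral_add hf'i (hg'2i.const_mul c), integral_const_mul, integral_const,
    smul_eq_mul] at hL
  have hCS := sq_integral_le_mul_integral_sq hba hg'i hg'2i
  nlinarith [mul_le_mul_of_nonneg_left hL (sub_nonneg.2 hba)]

lemma hasDerivAt_const_mul_rpow (k p : ℝ) {t : ℝ} (ht : 0 < t) :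
    HasDerivAt (fun s => k * s ^ p) (k * p * t ^ (p - 1)) t := by
  simpa only [mul_assoc] using (Real.hasDerivAt_rpow_const (p := p) (Or.inl ht.ne')).const_mul k

lemma continuousOn_const_mul_rpow (k p : ℝ) {a b : ℝ} (hb : 0 < b) :
    ContinuousOn (fun t => k * t ^ p) (Icc b a) :=
  continuousOn_const.mul <| continuousOn_id.rpow_const fun _ ht => Or.inl (hb.trans_le ht.1).ne'

lemma rpow_sub_mul_sub_add_mul_sq_sub_le {α σ r ρ c L : ℝ} (hc : 0 ≤ c)
    (hmono : ∀ x : ℝ, 0 < x → -α * r * x ^ (r - 1) + c * σ ^ 2 * ρ ^ 2 * x ^ (2 * ρ - 2) ≤ L)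
    {a b : ℝ} (hb : 0 < b) (hba : b ≤ a) :
    (a - b) * (-α * a ^ r - -α * b ^ r) + c * (σ * a ^ ρ - σ * b ^ ρ) ^ 2 ≤ L * (a - b) ^ 2 := by
  refine sub_mul_sub_add_mul_sq_sub_le_of_deriv hba hc
    (fun t ht => hasDerivAt_const_mul_rpow (-α) r (hb.trans_le ht.1))
    (fun t ht => hasDerivAt_const_mul_rpow σ ρ (hb.trans_le ht.1))
    (continuousOn_const_mul_rpow _ _ hb) (continuousOn_const_mul_rpow _ _ hb) fun t ht => ?_
  have ht : 0 < t := hb.trans_le ht.1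
  have hsq : t ^ (2 * ρ - 2) = (t ^ (ρ - 1)) ^ 2 := by
    rw [← Real.rpow_mul_natCast ht.le]
    ring_nf
  have := hmono t ht
  rw [hsq] at this
  linarith

lemma sub_mul_sub_add_mul_sq_sub_comp_le {f g P : ℝ → ℝ} {c L : ℝ} (hL : 0 ≤ L)
    (hf : AntitoneOn f (Ioi 0))
    (hfg : ∀ a b, 0 < b → b ≤ a → (a - b) * (f a - f b) + c * (g a - g b) ^ 2 ≤ L * (a - b) ^ 2)
    (hP : Monotone P) (hPlip : ∀ x y, y ≤ x → P x - P y ≤ x - y) (hPpos : ∀ x, 0 < x → 0 < P x)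
    {x y : ℝ} (hx : 0 < x) (hy : 0 < y) :
    (x - y) * (f (P x) - f (P y)) + c * (g (P x) - g (P y)) ^ 2 ≤ L * (x - y) ^ 2 := by
  wlog hyx : y ≤ x generalizing x y
  · convert this hy hx (le_of_not_ge hyx) using 1 <;> ring
  have hPyx : P y ≤ P x := hP hyx
  have hfP : f (P x) - f (P y) ≤ 0 := sub_nonpos.2 (hf (hPpos y hy) (hPpos x hx) hPyx)
  have hlip : P x - P y ≤ x - y := hPlip x y hyx
  calc (x - y) * (f (P x) - f (P y)) + c * (g (P x) - g (P y)) ^ 2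
      ≤ (P x - P y) * (f (P x) - f (P y)) + c * (g (P x) - g (P y)) ^ 2 := by
        gcongr ?_ + _
        exact mul_le_mul_of_nonpos_right hlip hfP
    _ ≤ L * (P x - P y) ^ 2 := hfg _ _ (hPpos y hy) hPyx
    _ ≤ L * (x - y) ^ 2 := by gcongr

lemma antitoneOn_neg_mul_rpow {α r : ℝ} (hα : 0 ≤ α) (hr : 0 ≤ r) :
    AntitoneOn (fun t : ℝ => -α * t ^ r) (Ioi 0) := fun s hs t _ hst => by
  have := Real.rpow_le_rpow (le_of_lt hs) hst hr
  show -α * t ^ r ≤ -α * s ^ r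
  nlinarith

lemma min_const_sub_min_const_le {x y : ℝ} (C : ℝ) (hyx : y ≤ x) : min x C - min y C ≤ x - y := by
  rcases le_total x C with hx | hx <;> rcases le_total y C with hy | hy <;>
    simp only [min_eq_left, min_eq_right, hx, hy] <;> linarith

theorem stmt_14_general (α₂ σ r ρ κ q L : ℝ) (hα₂ : 0 < α₂) (hr : 1 < r)
    (hq : 2 < q) (hL : 0 < L)
    (hmono : ∀ x : ℝ, 0 < x →
      -α₂ * r * x ^ (r - 1) + ((q - 1) / 2) * σ ^ 2 * ρ ^ 2 * x ^ (2 * ρ - 2) ≤ L) :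
    ∀ h : ℝ, 0 < h → ∀ x : ℝ, 0 < x → ∀ y : ℝ, 0 < y →
      (x - y) * ((-α₂ * (min x (h ^ (-κ))) ^ r) - (-α₂ * (min y (h ^ (-κ))) ^ r))
        + ((q - 1) / 2) * ((σ * (min x (h ^ (-κ))) ^ ρ) - (σ * (min y (h ^ (-κ))) ^ ρ)) ^ 2
        ≤ L * (x - y) ^ 2 := by
  intro h hh x hx y hy
  exact sub_mul_sub_add_mul_sq_sub_comp_le (f := fun t => -α₂ * t ^ r) (g := fun t => σ * t ^ ρ)
    hL.le (antitoneOn_neg_mul_rpow hα₂.le (by linarith))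
    (fun _ _ hb hba => rpow_sub_mul_sub_add_mul_sq_sub_le (by linarith) hmono hb hba)
    (fun _ _ hst => min_le_min_right _ hst) (fun _ _ => min_const_sub_min_const_le _)
    (fun _ hs => lt_min hs (Real.rpow_pos_of_pos hh _)) hx hy

/-- **Monotonicity transfers to the projected scheme.**
For `α₂, σ > 0`, `r, ρ > 1`, `f x = -α₂ x^r`, `g x = σ x^ρ` (real powers, `x > 0`), and
any exponent `κ`: if there are `q > 2` and `L > 0` with
`f'(x) + ((q-1)/2)|g'(x)|² = -α₂ r x^(r-1) + ((q-1)/2) σ² ρ² x^(2ρ-2) ≤ L` for all `x > 0`,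
then for every step size `h > 0` and all `x, y > 0`,
`(x-y)(f (𝒫_h x) - f (𝒫_h y)) + ((q-1)/2)(g (𝒫_h x) - g (𝒫_h y))² ≤ L (x-y)²`, where
`𝒫_h x = min x (h^(-κ))`. -/
theorem stmt_14 (α₂ σ r ρ κ q L : ℝ) (hα₂ : 0 < α₂) (hσ : 0 < σ) (hr : 1 < r) (hρ : 1 < ρ)
    (hq : 2 < q) (hL : 0 < L)
    (hmono : ∀ x : ℝ, 0 < x →
      -α₂ * r * x ^ (r - 1) + ((q - 1) / 2) * σ ^ 2 * ρ ^ 2 * x ^ (2 * ρ - 2) ≤ L) :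
    ∀ h : ℝ, 0 < h → ∀ x : ℝ, 0 < x → ∀ y : ℝ, 0 < y →
      (x - y) * ((-α₂ * (min x (h ^ (-κ))) ^ r) - (-α₂ * (min y (h ^ (-κ))) ^ r))
        + ((q - 1) / 2) * ((σ * (min x (h ^ (-κ))) ^ ρ) - (σ * (min y (h ^ (-κ))) ^ ρ)) ^ 2
        ≤ L * (x - y) ^ 2 :=
  stmt_14_general α₂ σ r ρ κ q L hα₂ hr hq hL hmono
end
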